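/- arXiv:2412.11162 — 2 statements merged into one kernel-verified Lean document; each statement's English description precedes it below -/
import Mathlib

section
/- All derivatives of σ₁ up to order p − 1 vanish at ρ = a₁: for 1 ≤ k ≤ p − 1, σ₁^{(k)}(a₁) = 0, so that σ₁ extended by 0 for ρ < a₁ is a C^{p−1} function. -/
/-!
Since `f₁(-1) = 0`, the cubic factors as `f₁ x = (x + 1) g x`, and `ρ̄ + 1 = (ρ - a₁) / T`, so
`σ₁ ρ = (ρ - a₁)^p H ρ` with `H` smooth: its denominator `f₁^p + f₂^p` never vanishes because
`f₁ + f₂ = 1`. Hence the first `p - 1` derivatives of `σ₁` vanish at `a₁`, and the extension by `0`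
is `max (ρ - a₁) 0 ^ p * H ρ`, a product of a `C^(p-1)` function and a smooth one.
-/

open Set
open scoped ContDiff

lemma pow_add_pow_pos {R : Type*} [Ring R] [LinearOrder R] [IsStrictOrderedRing R] {a b : R}
    (hab : 0 < a + b) (n : ℕ) : 0 < a ^ n + b ^ n := by
  rcases Nat.even_or_odd n with hn | hn
  · rcases eq_or_ne a 0 with rfl | ha
    · rw [zero_add] at hab
      exact add_pos_of_nonneg_of_pos (hn.pow_nonneg 0) (pow_pos hab n)
    · exact add_pos_of_pos_of_nonneg (hn.pow_pos ha) (hn.pow_nonneg b)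
  · have h : (-b) ^ n < a ^ n := hn.strictMono_pow (neg_lt_iff_pos_add.mpr hab)
    rw [hn.neg_pow] at h
    exact neg_lt_iff_pos_add.mp h

lemma hasDerivAt_max_pow (n : ℕ) (x : ℝ) :
    HasDerivAt (fun y : ℝ => max y 0 ^ (n + 2)) ((n + 2) * max x 0 ^ (n + 1)) x := by
  have hpow := hasDerivAt_pow (n + 2) x
  push_cast at hpow
  rcases lt_trichotomy x 0 with hx | rfl | hx
  · rw [max_eq_right hx.le, zero_pow n.succ_ne_zero, mul_zero]
    refine (hasDerivAt_const x 0).congr_of_eventuallyEq ?_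
    filter_upwards [Iio_mem_nhds hx] with y hy
    rw [max_eq_right (le_of_lt hy), zero_pow (by omega)]
  · rw [zero_pow n.succ_ne_zero, mul_zero] at hpow
    rw [max_self, zero_pow n.succ_ne_zero, mul_zero]
    have hleft : HasDerivWithinAt (fun y : ℝ => max y 0 ^ (n + 2)) 0 (Iic 0) 0 :=
      (hasDerivWithinAt_const 0 _ 0).congr_of_mem
        (fun y hy => by rw [max_eq_right (mem_Iic.mp hy), zero_pow (by omega)]) self_mem_Iic
    have hright : HasDerivWithinAt (fun y : ℝ => max y 0 ^ (n + 2)) 0 (Ici 0) 0 :=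
      hpow.hasDerivWithinAt.congr_of_mem
        (fun y hy => by rw [max_eq_left (mem_Ici.mp hy)]) self_mem_Ici
    simpa only [Iic_union_Ici, hasDerivWithinAt_univ] using hleft.union hright
  · rw [max_eq_left hx.le]
    refine hpow.congr_of_eventuallyEq ?_
    filter_upwards [Ioi_mem_nhds hx] with y hy
    rw [max_eq_left (le_of_lt hy)]

lemma contDiff_max_pow (n : ℕ) : ContDiff ℝ n (fun x : ℝ => max x 0 ^ (n + 1)) := by
  induction n with
  | zero => exact contDiff_zero.mpr (by fun_prop)
  | succ n ih =>
    rw [Nat.cast_succ, contDiff_succ_iff_deriv]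
    refine ⟨fun x => (hasDerivAt_max_pow n x).differentiableAt, by simp, ?_⟩
    have hderiv : deriv (fun x : ℝ => max x 0 ^ (n + 2)) =
        fun x => ((n : ℝ) + 2) * max x 0 ^ (n + 1) :=
      funext fun x => (hasDerivAt_max_pow n x).deriv
    rw [hderiv]
    exact contDiff_const.mul ih

lemma iteratedDeriv_sub_pow_mul_eq_zero {𝕜 : Type*} [NontriviallyNormedField 𝕜] (a : 𝕜)
    {k n : ℕ} (hkn : k < n) {h : 𝕜 → 𝕜} (hh : ContDiff 𝕜 k h) :
    iteratedDeriv k (fun x => (x - a) ^ n * h x) a = 0 := by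
  induction k generalizing n h with
  | zero => simp [Nat.pos_iff_ne_zero.mp hkn]
  | succ k ih =>
    obtain ⟨m, rfl⟩ : ∃ m, n = m + 1 := ⟨n - 1, by omega⟩
    rw [Nat.cast_succ] at hh
    have hderiv : deriv (fun x => (x - a) ^ (m + 1) * h x) =
        fun x => (x - a) ^ m * ((m + 1) * h x + (x - a) * deriv h x) := by
      funext x
      rw [deriv_fun_mul (by fun_prop) (hh.differentiable (by simp) x)]
      simp only [differentiableAt_fun_id, differentiableAt_const, DifferentiableAt.fun_sub,
        deriv_fun_pow, Nat.cast_add, Nat.cast_one, add_tsub_cancel_right, deriv_fun_sub,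
        deriv_id'', deriv_const', sub_zero, mul_one]
      ring
    rw [iteratedDeriv_succ', hderiv]
    exact ih (by omega) ((contDiff_const.mul (hh.of_le (by simp))).add
      ((contDiff_id.sub contDiff_const).mul (contDiff_succ_iff_deriv.mp hh).2.2))

theorem stmt_2_general (p : ℕ) (hp : 2 ≤ p) (a₁ T S : ℝ)
    (hT : 0 < T)
    (f₁ f₂ : ℝ → ℝ)
    (hf₁ : ∀ x : ℝ, f₁ x = (1/2 - 1/(p : ℝ)) * x ^ 3 + x / (p : ℝ) + 1/2)
    (hf₂ : ∀ x : ℝ, f₂ x = 1 - f₁ x)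
    (σ₁ σext : ℝ → ℝ)
    (hσ₁ : ∀ ρ : ℝ, σ₁ ρ =
      2 * S * (f₁ ((ρ - (a₁ + T)) / T)) ^ p /
        ((f₁ ((ρ - (a₁ + T)) / T)) ^ p + (f₂ ((ρ - (a₁ + T)) / T)) ^ p))
    (hσext : ∀ ρ : ℝ, σext ρ = if ρ < a₁ then 0 else σ₁ ρ) :
    (∀ k : ℕ, 1 ≤ k → k ≤ p - 1 → iteratedDeriv k σ₁ a₁ = 0) ∧
    ContDiffOn ℝ (p - 1 : ℕ) σext (Set.Iio (a₁ + T)) := by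
  obtain ⟨g, hg, hf₁g⟩ : ∃ g : ℝ → ℝ, ContDiff ℝ ∞ g ∧ ∀ x, f₁ x = (x + 1) * g x :=
    ⟨fun x => (1/2 - 1/(p : ℝ)) * x ^ 2 - (1/2 - 1/(p : ℝ)) * x + 1/2, by fun_prop,
      fun x => by rw [hf₁]; ring⟩
  have hf₁_smooth : ContDiff ℝ ∞ f₁ := by rw [funext hf₁]; fun_prop
  set u : ℝ → ℝ := fun ρ => (ρ - (a₁ + T)) / T
  set H : ℝ → ℝ := fun ρ => 2 * S * (g (u ρ) / T) ^ p / (f₁ (u ρ) ^ p + (1 - f₁ (u ρ)) ^ p)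
  have hH : ContDiff ℝ ∞ H :=
    (contDiff_const.mul ((hg.comp (by fun_prop)).div_const T |>.pow p)).div (by fun_prop)
      fun ρ => (pow_add_pow_pos (by simp) p).ne'
  have hσ₁H : σ₁ = fun ρ => (ρ - a₁) ^ p * H ρ := by
    funext ρ
    have hf₁u : f₁ (u ρ) = (ρ - a₁) * (g (u ρ) / T) := by
      simp only [u, hf₁g]; field_simp; ring
    rw [hσ₁, hf₂]
    simp only [H]
    generalize f₁ (u ρ) ^ p + (1 - f₁ (u ρ)) ^ p = D
    rw [hf₁u, mul_pow]; ring
  have hσextH : σext = fun ρ => max (ρ - a₁) 0 ^ p * H ρ := by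
    funext ρ
    rw [hσext, hσ₁H]
    split_ifs with h
    · rw [max_eq_right (by linarith), zero_pow (by omega), zero_mul]
    · rw [max_eq_left (by linarith)]
  refine ⟨fun k hk₁ hk₂ => hσ₁H ▸
    iteratedDeriv_sub_pow_mul_eq_zero a₁ (by omega) (hH.of_le (mod_cast le_top)), ?_⟩
  rw [hσextH]
  obtain ⟨n, rfl⟩ : ∃ n, p = n + 1 := ⟨p - 1, by omega⟩
  rw [Nat.add_sub_cancel]
  exact (((contDiff_max_pow n).comp (by fun_prop)).mul (hH.of_le (mod_cast le_top))).contDiffOn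

/-- all derivatives of `σ₁` up to order `p - 1` vanish at `ρ = a₁`,
so the extension of `σ₁` by `0` for `ρ < a₁` is a `C^{p-1}` function (below the
outer PML boundary `a₁ + T`). -/
theorem stmt_2 (p : ℕ) (hp : 2 ≤ p) (a₁ T S : ℝ)
    (ha₁ : 0 < a₁) (hT : 0 < T) (hS : 0 < S)
    (f₁ f₂ : ℝ → ℝ)
    (hf₁ : ∀ x : ℝ, f₁ x = (1/2 - 1/(p : ℝ)) * x ^ 3 + x / (p : ℝ) + 1/2)
    (hf₂ : ∀ x : ℝ, f₂ x = 1 - f₁ x)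
    (σ₁ σext : ℝ → ℝ)
    (hσ₁ : ∀ ρ : ℝ, σ₁ ρ =
      2 * S * (f₁ ((ρ - (a₁ + T)) / T)) ^ p /
        ((f₁ ((ρ - (a₁ + T)) / T)) ^ p + (f₂ ((ρ - (a₁ + T)) / T)) ^ p))
    (hσext : ∀ ρ : ℝ, σext ρ = if ρ < a₁ then 0 else σ₁ ρ) :
    (∀ k : ℕ, 1 ≤ k → k ≤ p - 1 → iteratedDeriv k σ₁ a₁ = 0) ∧
    ContDiffOn ℝ (p - 1 : ℕ) σext (Set.Iio (a₁ + T)) :=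
  stmt_2_general p hp a₁ T S hT f₁ f₂ hf₁ hf₂ σ₁ σext hσ₁ hσext
end

section
/- (Graded-mesh scaling function endpoint behavior) The scaling function s = ξ(t) = (s⁰ ξ₁^p + s¹ ξ₂^p)/(ξ₁^p + ξ₂^p), with ξ₁(ξ) = (1/2 − 1/p)ξ³ + ξ/p + 1/2, ξ₂ = 1 − ξ₁, ξ = (2t − (t⁰ + t¹))/(t¹ − t⁰), satisfies ξ(t⁰) = s⁰, ξ(t¹) = s¹, and its derivatives up to order p − 1 vanish at t = t⁰ and t = t¹. -/
/-!
Put `w := ξ₁ ∘ x`, where `x(t) = (2t - (t⁰ + t¹)) / (t¹ - t⁰)`, so that `ξ₂ ∘ x = 1 - w`,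
`w(t⁰) = 0` and `w(t¹) = 1`. The denominator `w^p + (1 - w)^p` never vanishes, since its two
bases sum to `1`; hence `ξ = s⁰ + w^p · g = s¹ + (1 - w)^p · h` with `g`, `h` smooth. A derivative
of order `k ≤ p` of `v^p · g` is still of the form `v^(p - k) · g'`, so it vanishes at a zero of `v`
when `k < p`.
-/

open scoped ContDiff

theorem pow_add_pow_ne_zero_of_add_ne_zero {R : Type*} [CommRing R] [LinearOrder R]
    [IsStrictOrderedRing R] {x y : R} (n : ℕ) (hxy : x + y ≠ 0) : x ^ n + y ^ n ≠ 0 := by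
  intro h
  rcases Nat.even_or_odd n with hn | hn
  · obtain ⟨hx, hy⟩ := (add_eq_zero_iff_of_nonneg (hn.pow_nonneg x) (hn.pow_nonneg y)).mp h
    simp [eq_zero_of_pow_eq_zero hx, eq_zero_of_pow_eq_zero hy] at hxy
  · rw [add_eq_zero_iff_eq_neg, ← hn.neg_pow, hn.pow_inj] at h
    exact hxy (by rw [h, neg_add_cancel])

section

variable {𝕜 : Type*} [NontriviallyNormedField 𝕜]

theorem exists_iteratedDeriv_pow_mul_eq_pow_mul {v g : 𝕜 → 𝕜} (hv : ContDiff 𝕜 ∞ v)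
    (hg : ContDiff 𝕜 ∞ g) {p k : ℕ} (hk : k ≤ p) :
    ∃ h : 𝕜 → 𝕜, ContDiff 𝕜 ∞ h ∧
      iteratedDeriv k (fun t => v t ^ p * g t) = fun t => v t ^ (p - k) * h t := by
  induction k with
  | zero => exact ⟨g, hg, by simp⟩
  | succ k ih =>
    obtain ⟨h, hh, heq⟩ := ih (by omega)
    refine ⟨fun t => (p - k : ℕ) * deriv v t * h t + v t * deriv h t, ?_, ?_⟩
    · have := (contDiff_infty_iff_deriv.mp hv).2
      have := (contDiff_infty_iff_deriv.mp hh).2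
      fun_prop
    · rw [iteratedDeriv_succ, heq]
      funext t
      have hvd : DifferentiableAt 𝕜 v t := hv.differentiable (by simp) t
      have hhd : DifferentiableAt 𝕜 h t := hh.differentiable (by simp) t
      have hvpd : DifferentiableAt 𝕜 (fun t => v t ^ (p - k)) t := hvd.pow _
      rw [deriv_fun_mul hvpd hhd, deriv_fun_pow hvd, show p - k = p - (k + 1) + 1 by omega,
        Nat.add_sub_cancel, pow_succ]
      ring

theorem iteratedDeriv_pow_mul_eq_zero {v g : 𝕜 → 𝕜} (hv : ContDiff 𝕜 ∞ v)
    (hg : ContDiff 𝕜 ∞ g) {p k : ℕ} (hk : k < p) {x : 𝕜} (hx : v x = 0) :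
    iteratedDeriv k (fun t => v t ^ p * g t) x = 0 := by
  obtain ⟨h, -, heq⟩ := exists_iteratedDeriv_pow_mul_eq_pow_mul hv hg hk.le
  simp only [heq, hx, zero_pow (Nat.sub_ne_zero_of_lt hk), zero_mul]

end

theorem two_mul_sub_add_div_sub_eq_neg_one {t₀ t₁ : ℝ} (h : t₀ ≠ t₁) :
    (2 * t₀ - (t₀ + t₁)) / (t₁ - t₀) = -1 := by
  rw [div_eq_iff (sub_ne_zero.mpr h.symm)]
  ring

theorem two_mul_sub_add_div_sub_eq_one {t₀ t₁ : ℝ} (h : t₀ ≠ t₁) :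
    (2 * t₁ - (t₀ + t₁)) / (t₁ - t₀) = 1 := by
  rw [div_eq_iff (sub_ne_zero.mpr h.symm)]
  ring

-- The scaling function as a function of the weight `a = ξ₁`, with `1 - a = ξ₂`.
noncomputable def powerBlend (p : ℕ) (s₀ s₁ a : ℝ) : ℝ :=
  (s₀ * (1 - a) ^ p + s₁ * a ^ p) / (a ^ p + (1 - a) ^ p)

theorem powerBlend_zero {p : ℕ} (hp : p ≠ 0) (s₀ s₁ : ℝ) : powerBlend p s₀ s₁ 0 = s₀ := by
  simp [powerBlend, zero_pow hp]

theorem powerBlend_one_sub (p : ℕ) (s₀ s₁ a : ℝ) :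
    powerBlend p s₀ s₁ (1 - a) = powerBlend p s₁ s₀ a := by
  simp only [powerBlend, sub_sub_cancel]
  ring

theorem powerBlend_eq_add_pow_mul (p : ℕ) (s₀ s₁ a : ℝ) :
    powerBlend p s₀ s₁ a = s₀ + a ^ p * ((s₁ - s₀) / (a ^ p + (1 - a) ^ p)) := by
  have hD : a ^ p + (1 - a) ^ p ≠ 0 := pow_add_pow_ne_zero_of_add_ne_zero p (by simp)
  rw [powerBlend]
  field_simp
  ring

theorem iteratedDeriv_powerBlend_comp_eq_zero {w : ℝ → ℝ} (hw : ContDiff ℝ ∞ w) {x : ℝ}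
    (hx : w x = 0) (s₀ s₁ : ℝ) {p k : ℕ} (hk : 0 < k) (hkp : k < p) :
    iteratedDeriv k (fun t => powerBlend p s₀ s₁ (w t)) x = 0 := by
  have hD : ∀ t, w t ^ p + (1 - w t) ^ p ≠ 0 := fun t =>
    pow_add_pow_ne_zero_of_add_ne_zero p (by simp)
  simp only [powerBlend_eq_add_pow_mul]
  rw [iteratedDeriv_const_add hk]
  exact iteratedDeriv_pow_mul_eq_zero hw (contDiff_const.div (by fun_prop) hD) hkp hx

theorem stmt_17_general (p : ℕ) (hp : 2 ≤ p) (t0 t1 s0 s1 : ℝ)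
    (ht : t0 < t1)
    (ξ₁ ξ₂ : ℝ → ℝ)
    (hξ₁ : ∀ x : ℝ, ξ₁ x = (1/2 - 1/(p : ℝ)) * x ^ 3 + x / (p : ℝ) + 1/2)
    (hξ₂ : ∀ x : ℝ, ξ₂ x = 1 - ξ₁ x)
    (ξ : ℝ → ℝ)
    (hξ : ∀ t : ℝ, ξ t =
      (s0 * (ξ₂ ((2 * t - (t0 + t1)) / (t1 - t0))) ^ p
        + s1 * (ξ₁ ((2 * t - (t0 + t1)) / (t1 - t0))) ^ p) /
      ((ξ₁ ((2 * t - (t0 + t1)) / (t1 - t0))) ^ p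
        + (ξ₂ ((2 * t - (t0 + t1)) / (t1 - t0))) ^ p)) :
    ξ t0 = s0 ∧ ξ t1 = s1 ∧
    (∀ k : ℕ, 1 ≤ k → k ≤ p - 1 →
      iteratedDeriv k ξ t0 = 0 ∧ iteratedDeriv k ξ t1 = 0) := by
  set w : ℝ → ℝ := fun t => ξ₁ ((2 * t - (t0 + t1)) / (t1 - t0)) with hw
  have hξ_left : ξ = fun t => powerBlend p s0 s1 (w t) :=
    funext fun t => by rw [hξ, hξ₂, powerBlend]
  have hξ_right : ξ = fun t => powerBlend p s1 s0 (1 - w t) := by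
    simp only [powerBlend_one_sub, hξ_left]
  have hw0 : w t0 = 0 := by
    simp only [hw, hξ₁, two_mul_sub_add_div_sub_eq_neg_one ht.ne]
    ring
  have hw1 : 1 - w t1 = 0 := by
    simp only [hw, hξ₁, two_mul_sub_add_div_sub_eq_one ht.ne]
    ring
  have hw_smooth : ContDiff ℝ ∞ w := by
    simp only [hw, hξ₁]
    fun_prop
  refine ⟨?_, ?_, fun k hk hkp => ⟨?_, ?_⟩⟩
  · simp only [hξ_left, hw0, powerBlend_zero (by omega : p ≠ 0)]
  · simp only [hξ_right, hw1, powerBlend_zero (by omega : p ≠ 0)]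
  · rw [hξ_left]
    exact iteratedDeriv_powerBlend_comp_eq_zero hw_smooth hw0 s0 s1 hk (by omega)
  · rw [hξ_right]
    exact iteratedDeriv_powerBlend_comp_eq_zero (w := fun t => 1 - w t) (by fun_prop) hw1 s1 s0 hk
      (by omega)

/-- graded-mesh scaling function endpoint behavior: the scaling
function `ξ` maps `t⁰ ↦ s⁰`, `t¹ ↦ s¹`, and its derivatives up to order
`p - 1` vanish at both endpoints. -/
theorem stmt_17 (p : ℕ) (hp : 2 ≤ p) (t0 t1 s0 s1 : ℝ)
    (ht : t0 < t1) (hs : s0 < s1)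
    (ξ₁ ξ₂ : ℝ → ℝ)
    (hξ₁ : ∀ x : ℝ, ξ₁ x = (1/2 - 1/(p : ℝ)) * x ^ 3 + x / (p : ℝ) + 1/2)
    (hξ₂ : ∀ x : ℝ, ξ₂ x = 1 - ξ₁ x)
    (ξ : ℝ → ℝ)
    (hξ : ∀ t : ℝ, ξ t =
      (s0 * (ξ₂ ((2 * t - (t0 + t1)) / (t1 - t0))) ^ p
        + s1 * (ξ₁ ((2 * t - (t0 + t1)) / (t1 - t0))) ^ p) /
      ((ξ₁ ((2 * t - (t0 + t1)) / (t1 - t0))) ^ p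
        + (ξ₂ ((2 * t - (t0 + t1)) / (t1 - t0))) ^ p)) :
    ξ t0 = s0 ∧ ξ t1 = s1 ∧
    (∀ k : ℕ, 1 ≤ k → k ≤ p - 1 →
      iteratedDeriv k ξ t0 = 0 ∧ iteratedDeriv k ξ t1 = 0) :=
  stmt_17_general p hp t0 t1 s0 s1 ht ξ₁ ξ₂ hξ₁ hξ₂ ξ hξ
end
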